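/- arXiv:2103.15382 — 7 statements merged into one kernel-verified Lean document; each statement's English description precedes it below -/
import Mathlib

section
/- Let ψ satisfy (A) and let v ∈ H²₀(0,1) be symmetric around 1/2 (v(x)=v(1-x)) with v ≥ ψ, and suppose W(v) ≤ 4c₁² for some c₁ ∈ (0, c₀). Then max_{x∈[0,1]} |v'(x)| ≤ G⁻¹(c₁/2). -/
open MeasureTheory

noncomputable def c0 : ℝ := ∫ τ : ℝ, (1 + τ^2) ^ (-(5/4) : ℝ)

noncomputable def G (t : ℝ) : ℝ := ∫ τ in (0:ℝ)..t, (1 + τ^2) ^ (-(5/4) : ℝ)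

noncomputable def Ginv : ℝ → ℝ := Function.invFun G

/-!
Put `g := G ∘ v'`. Then `g' = v'' (1 + v'²)^(-5/4)`, whose square is the integrand of `W(v)`.
Since `v'(0) = 0` and the symmetry of `v` makes `v'`, hence `g`, odd about `1/2`, `g` vanishes
at `0`, `1/2` and `1`. If `g` vanishes at both ends of `[a, b]`, Cauchy–Schwarz from either end gives
`4 g(y)² ≤ (b - a) ∫ₐᵇ g'²`. Using this on `[0, 1/2]` at `y` and on `[1/2, 1]` at `1 - y` yields
`16 g(y)² ≤ W(v) ≤ 4 c₁²`, i.e. `|G(v'(y))| ≤ c₁/2`, and since `G` is odd and increasing with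
range `(-c₀/2, c₀/2)` this is `|v'(y)| ≤ G⁻¹(c₁/2)`.
-/

open Set Filter Topology

noncomputable def dG (τ : ℝ) : ℝ := (1 + τ ^ 2) ^ (-(5/4) : ℝ)

lemma dG_pos (τ : ℝ) : 0 < dG τ := by unfold dG; positivity

lemma dG_neg (τ : ℝ) : dG (-τ) = dG τ := by simp [dG]

lemma dG_sq (τ : ℝ) : dG τ ^ 2 = (1 + τ ^ 2) ^ (-(5/2) : ℝ) := by
  rw [dG, ← Real.rpow_natCast, ← Real.rpow_mul (by positivity)]
  norm_num

lemma continuous_dG : Continuous dG :=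
  (by fun_prop : Continuous fun τ : ℝ => 1 + τ ^ 2).rpow_const fun τ => Or.inl (by positivity)

lemma integrable_dG : Integrable dG := by
  refine integrable_inv_one_add_sq.mono continuous_dG.aestronglyMeasurable
    (Eventually.of_forall fun τ => ?_)
  rw [Real.norm_of_nonneg (dG_pos τ).le,
    Real.norm_of_nonneg (by positivity : (0:ℝ) ≤ (1 + τ ^ 2)⁻¹), ← Real.rpow_neg_one]
  exact Real.rpow_le_rpow_of_exponent_le (by nlinarith) (by norm_num)

lemma G_eq_integral_dG (t : ℝ) : G t = ∫ τ in (0:ℝ)..t, dG τ := rfl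

lemma hasDerivAt_G (t : ℝ) : HasDerivAt G (dG t) t :=
  intervalIntegral.integral_hasDerivAt_right (continuous_dG.intervalIntegrable 0 t)
    (continuous_dG.stronglyMeasurableAtFilter _ _) continuous_dG.continuousAt

lemma continuous_G : Continuous G :=
  continuous_iff_continuousAt.2 fun t => (hasDerivAt_G t).continuousAt

lemma G_zero : G 0 = 0 := intervalIntegral.integral_same

lemma G_strictMono : StrictMono G :=
  strictMono_of_hasDerivAt_pos hasDerivAt_G dG_pos

lemma G_neg (t : ℝ) : G (-t) = -G t := by
  have h := intervalIntegral.integral_comp_neg (a := 0) (b := t) dG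
  simp only [dG_neg, neg_zero] at h
  rw [G_eq_integral_dG, G_eq_integral_dG, h, intervalIntegral.integral_symm]

lemma G_abs (t : ℝ) : G |t| = |G t| := by
  rcases le_total 0 t with ht | ht
  · rw [abs_of_nonneg ht, abs_of_nonneg (G_zero ▸ G_strictMono.monotone ht)]
  · rw [abs_of_nonpos ht, abs_of_nonpos (G_zero ▸ G_strictMono.monotone ht), G_neg]

lemma integral_Ioi_dG : ∫ τ in Ioi 0, dG τ = c0 / 2 := by
  have hsplit := intervalIntegral.integral_Iic_add_Ioi (b := 0)
    integrable_dG.integrableOn integrable_dG.integrableOn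
  have hreflect : ∫ τ in Iic 0, dG τ = ∫ τ in Ioi 0, dG τ := by
    simpa [dG_neg] using integral_comp_neg_Iic 0 dG
  change _ = (∫ τ, dG τ) / 2
  rw [← hsplit, hreflect]
  ring

lemma tendsto_G_atTop : Tendsto G atTop (𝓝 (c0 / 2)) :=
  integral_Ioi_dG ▸ intervalIntegral_tendsto_integral_Ioi 0 integrable_dG.integrableOn tendsto_id

lemma G_Ginv {c : ℝ} (hc : |c| < c0 / 2) : G (Ginv c) = c := by
  obtain ⟨t, ht⟩ := (tendsto_G_atTop.eventually (lt_mem_nhds hc)).exists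
  have hc_mem : c ∈ Icc (G (-t)) (G t) := by
    rw [G_neg]; constructor <;> linarith [neg_abs_le c, le_abs_self c]
  exact Function.invFun_eq (intermediate_value_univ (-t) t continuous_G hc_mem)

lemma abs_le_Ginv_iff {s c : ℝ} (hc : |c| < c0 / 2) : |s| ≤ Ginv c ↔ |G s| ≤ c := by
  rw [← G_strictMono.le_iff_le, G_Ginv hc, G_abs]

lemma sq_integral_le_measureReal_mul_integral_sq {α : Type*} [MeasurableSpace α]
    {μ : Measure α} [IsFiniteMeasure μ] {w : α → ℝ} (hw : MemLp w 2 μ) :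
    (∫ x, w x ∂μ) ^ 2 ≤ μ.real univ * ∫ x, w x ^ 2 ∂μ := by
  have hw1 : Integrable w μ := hw.integrable one_le_two
  have hw2 : Integrable (fun x => w x ^ 2) μ := hw.integrable_sq
  have hquad : ∀ t : ℝ,
      0 ≤ μ.real univ * (t * t) + (-2 * ∫ x, w x ∂μ) * t + ∫ x, w x ^ 2 ∂μ := by
    intro t
    have hexpand : ∫ x, (t - w x) ^ 2 ∂μ
        = μ.real univ * (t * t) + (-2 * ∫ x, w x ∂μ) * t + ∫ x, w x ^ 2 ∂μ := by
      have hlin : Integrable (fun x => t ^ 2 - 2 * t * w x) μ :=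
        (integrable_const _).sub (hw1.const_mul _)
      simp_rw [sub_sq]
      rw [integral_add hlin hw2, integral_sub (integrable_const _) (hw1.const_mul _),
        integral_const, integral_const_mul]
      simp only [smul_eq_mul]
      ring
    exact hexpand ▸ integral_nonneg fun x => sq_nonneg _
  have := discrim_le_zero hquad
  rw [discrim] at this
  linarith

lemma sq_intervalIntegral_le {w : ℝ → ℝ} {a b : ℝ} (hab : a ≤ b)
    (hw : MemLp w 2 (volume.restrict (Ioc a b))) :
    (∫ x in a..b, w x) ^ 2 ≤ (b - a) * ∫ x in a..b, w x ^ 2 := by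
  have := sq_integral_le_measureReal_mul_integral_sq hw
  rwa [measureReal_restrict_apply_univ, Real.volume_real_Ioc_of_le hab,
    ← intervalIntegral.integral_of_le hab, ← intervalIntegral.integral_of_le hab] at this

lemma four_mul_sq_le_of_sq_le {t p q A B : ℝ} (hp : 0 ≤ p) (hq : 0 ≤ q) (hA : 0 ≤ A)
    (hB : 0 ≤ B) (hpA : t ^ 2 ≤ p * A) (hqB : t ^ 2 ≤ q * B) :
    4 * t ^ 2 ≤ (p + q) * (A + B) := by
  have hcross : 2 * t ^ 2 ≤ p * B + q * A := by
    nlinarith [mul_le_mul hpA hqB (sq_nonneg t) (by positivity), sq_nonneg (p * B - q * A),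
      mul_nonneg hp hB, mul_nonneg hq hA, sq_nonneg t]
  nlinarith

lemma four_mul_sq_le_of_hasDerivAt {g w : ℝ → ℝ} {a b y : ℝ}
    (hg : ∀ x ∈ Icc a b, HasDerivAt g (w x) x) (hw : MemLp w 2 (volume.restrict (Ioc a b)))
    (ha : g a = 0) (hb : g b = 0) (hy : y ∈ Icc a b) :
    4 * g y ^ 2 ≤ (b - a) * ∫ x in a..b, w x ^ 2 := by
  obtain ⟨hay, hyb⟩ := hy
  have hL2 {c d : ℝ} (hc : a ≤ c) (hd : d ≤ b) : MemLp w 2 (volume.restrict (Ioc c d)) :=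
    hw.mono_measure (Measure.restrict_mono (Ioc_subset_Ioc hc hd) le_rfl)
  have hsq {c d : ℝ} (hc : a ≤ c) (hcd : c ≤ d) (hd : d ≤ b) :
      IntervalIntegrable (fun x => w x ^ 2) volume c d :=
    (intervalIntegrable_iff_integrableOn_Ioc_of_le hcd).2 (hL2 hc hd).integrable_sq
  have hftc {c d : ℝ} (hc : a ≤ c) (hcd : c ≤ d) (hd : d ≤ b) :
      ∫ x in c..d, w x = g d - g c := by
    refine intervalIntegral.integral_eq_sub_of_hasDerivAt (fun x hx => hg x ?_) ?_
    · rw [uIcc_of_le hcd] at hx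
      exact ⟨hc.trans hx.1, hx.2.trans hd⟩
    · exact (intervalIntegrable_iff_integrableOn_Ioc_of_le hcd).2
        ((hL2 hc hd).integrable one_le_two)
  have hleft : g y ^ 2 ≤ (y - a) * ∫ x in a..y, w x ^ 2 := by
    simpa [hftc le_rfl hay hyb, ha] using sq_intervalIntegral_le hay (hL2 le_rfl hyb)
  have hright : g y ^ 2 ≤ (b - y) * ∫ x in y..b, w x ^ 2 := by
    simpa [hftc hay hyb le_rfl, hb] using sq_intervalIntegral_le hyb (hL2 hay le_rfl)
  have hsplit := intervalIntegral.integral_add_adjacent_intervals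
    (hsq le_rfl hay hyb) (hsq hay hyb le_rfl)
  have hmono {c d : ℝ} (hcd : c ≤ d) : 0 ≤ ∫ x in c..d, w x ^ 2 :=
    intervalIntegral.integral_nonneg hcd fun x _ => sq_nonneg (w x)
  calc 4 * g y ^ 2 ≤ ((y - a) + (b - y)) * ((∫ x in a..y, w x ^ 2) + ∫ x in y..b, w x ^ 2) :=
        four_mul_sq_le_of_sq_le (by linarith) (by linarith) (hmono hay) (hmono hyb) hleft hright
    _ = (b - a) * ∫ x in a..b, w x ^ 2 := by rw [hsplit]; ring

lemma apply_sub_eq_neg_of_hasDerivAt_of_symm {f f' : ℝ → ℝ} {c : ℝ}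
    (hf : ∀ x, HasDerivAt f (f' x) x) (hsymm : ∀ x, f x = f (c - x)) (x : ℝ) :
    f' (c - x) = -f' x := by
  have hreflect := (hf (c - x)).comp_const_sub c x
  rw [← funext hsymm] at hreflect
  rw [(hf x).unique hreflect, neg_neg]

lemma sixteen_mul_sq_le_of_antisymm {g w : ℝ → ℝ}
    (hg : ∀ x ∈ Icc (0:ℝ) 1, HasDerivAt g (w x) x)
    (hw : MemLp w 2 (volume.restrict (Ioc 0 1))) (h0 : g 0 = 0) (hanti : ∀ x, g (1 - x) = -g x) {y : ℝ} (hy : y ∈ Icc (0:ℝ) 1) :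
    16 * g y ^ 2 ≤ ∫ x in (0:ℝ)..1, w x ^ 2 := by
  wlog hy_half : y ≤ 1 / 2 generalizing y
  · have := this (y := 1 - y) ⟨by linarith [hy.2], by linarith [hy.1]⟩ (by linarith)
    rwa [hanti, neg_sq] at this
  have h1 : g 1 = 0 := by simpa [h0] using hanti 0
  have h_half : g (1 / 2) = 0 := by
    linarith [hanti (1 / 2), show (1 : ℝ) - 1 / 2 = 1 / 2 by norm_num]
  have hL2 {a b : ℝ} (ha : 0 ≤ a) (hb : b ≤ 1) : MemLp w 2 (volume.restrict (Ioc a b)) :=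
    hw.mono_measure (Measure.restrict_mono (Ioc_subset_Ioc ha hb) le_rfl)
  have hsq {a b : ℝ} (ha : 0 ≤ a) (hab : a ≤ b) (hb : b ≤ 1) :
      IntervalIntegrable (fun x => w x ^ 2) volume a b :=
    (intervalIntegrable_iff_integrableOn_Ioc_of_le hab).2 (hL2 ha hb).integrable_sq
  have hleft := four_mul_sq_le_of_hasDerivAt (fun x hx => hg x ⟨hx.1, by linarith [hx.2]⟩)
    (hL2 le_rfl (by norm_num)) h0 h_half ⟨hy.1, hy_half⟩
  have hright := four_mul_sq_le_of_hasDerivAt (fun x hx => hg x ⟨by linarith [hx.1], hx.2⟩)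
    (hL2 (by norm_num) le_rfl) h_half h1 (y := 1 - y) ⟨by linarith, by linarith [hy.1]⟩
  rw [hanti, neg_sq] at hright
  have hsplit := intervalIntegral.integral_add_adjacent_intervals
    (hsq (b := 1 / 2) le_rfl (by norm_num) (by norm_num))
    (hsq (a := 1 / 2) (by norm_num) (by norm_num) le_rfl)
  linarith

theorem gradient_bound_symmetric_general (v v' v'' : ℝ → ℝ) (c₁ : ℝ)
    -- v ∈ H²₀(0,1), symmetric, above the obstacle
    (hv : ∀ x, HasDerivAt v (v' x) x)
    (hv' : ∀ x, HasDerivAt v' (v'' x) x)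
    (hv'0 : v' 0 = 0)
    (hsym : ∀ x, v x = v (1 - x))
    -- energy bound
    (hWint : IntervalIntegrable (fun x => v'' x ^ 2 * (1 + v' x ^ 2) ^ (-(5/2) : ℝ)) volume 0 1)
    (hc₁ : c₁ ∈ Set.Ioo (0:ℝ) c0)
    (hW : (∫ x in (0:ℝ)..1, v'' x ^ 2 * (1 + v' x ^ 2) ^ (-(5/2) : ℝ)) ≤ 4 * c₁ ^ 2) :
    ∀ x ∈ Set.Icc (0:ℝ) 1, |v' x| ≤ Ginv (c₁ / 2) := by
  set g : ℝ → ℝ := fun x => G (v' x)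
  set w : ℝ → ℝ := fun x => dG (v' x) * v'' x
  have hg (x : ℝ) : HasDerivAt g (w x) x := (hasDerivAt_G (v' x)).comp x (hv' x)
  have hw_sq : (fun x => w x ^ 2) = fun x => v'' x ^ 2 * (1 + v' x ^ 2) ^ (-(5/2) : ℝ) := by
    funext x
    rw [mul_pow, dG_sq, mul_comm]
  rw [← hw_sq] at hWint hW
  have hwL2 : MemLp w 2 (volume.restrict (Ioc 0 1)) := by
    have hw_meas : Measurable w := funext (fun x => (hg x).deriv) ▸ measurable_deriv g
    exact (memLp_two_iff_integrable_sq hw_meas.aestronglyMeasurable).2 hWint.1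
  have hg_antisymm (x : ℝ) : g (1 - x) = -g x := by
    simp only [g, apply_sub_eq_neg_of_hasDerivAt_of_symm hv hsym x, G_neg]
  intro x hx
  have h16 := sixteen_mul_sq_le_of_antisymm (fun x _ => hg x) hwL2
    (by simp only [g, hv'0, G_zero]) hg_antisymm hx
  rw [abs_le_Ginv_iff (by rw [abs_of_pos] <;> linarith [hc₁.1, hc₁.2])]
  exact abs_le_of_sq_le_sq (by linarith) (by linarith [hc₁.1])

/-- Lemma 2.2: gradient bound for symmetric admissible functions with small energy. -/
theorem gradient_bound_symmetric (ψ v v' v'' : ℝ → ℝ) (c₁ : ℝ)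
    -- condition (A) on the obstacle
    (hψc : ContinuousOn ψ (Set.Icc (0:ℝ) 1))
    (hψsym : ∀ x ∈ Set.Ioo (0:ℝ) 1, ψ x = ψ (1 - x))
    (hψneg : ∃ σ > (0:ℝ), (∀ x ∈ Set.Ico (0:ℝ) σ, ψ x < 0) ∧
      ∀ x ∈ Set.Ioc (1 - σ) 1, ψ x < 0)
    (hψpos : ∃ x₀ ∈ Set.Ioo (0:ℝ) 1, 0 < ψ x₀)
    -- v ∈ H²₀(0,1), symmetric, above the obstacle
    (hv : ∀ x, HasDerivAt v (v' x) x)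
    (hv' : ∀ x, HasDerivAt v' (v'' x) x)
    (hv'c : Continuous v')
    (hv0 : v 0 = 0) (hv1 : v 1 = 0) (hv'0 : v' 0 = 0) (hv'1 : v' 1 = 0)
    (hsym : ∀ x, v x = v (1 - x))
    (hge : ∀ x ∈ Set.Icc (0:ℝ) 1, ψ x ≤ v x)
    -- energy bound
    (hWint : IntervalIntegrable (fun x => v'' x ^ 2 * (1 + v' x ^ 2) ^ (-(5/2) : ℝ)) volume 0 1)
    (hc₁ : c₁ ∈ Set.Ioo (0:ℝ) c0)
    (hW : (∫ x in (0:ℝ)..1, v'' x ^ 2 * (1 + v' x ^ 2) ^ (-(5/2) : ℝ)) ≤ 4 * c₁ ^ 2) :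
    ∀ x ∈ Set.Icc (0:ℝ) 1, |v' x| ≤ Ginv (c₁ / 2) :=
  gradient_bound_symmetric_general v v' v'' c₁ hv hv' hv'0 hsym hWint hc₁ hW
end

section
/- If u ∈ C⁴([0,1]) is symmetric around x = 1/2, solves the elastica equation (1+u'²)^(-1/2)·(κ'/(1+u'²)^(1/2))' + κ³/2 = 0 on (0,1), and satisfies full Dirichlet conditions u(0)=u(1)=0 and u'(0)=u'(1)=0, then u ≡ 0. -/
/-!
Write `v = u'`, `ρ = (1 + v²)^(-1/2)` for the cosine of the tangent angle and `d/ds = ρ d/dx` for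
the arclength derivative, so that the equation reads `κ_ss + κ³/2 = 0`. Its first integral
`F = ρ (κ_s + κ² v / 2)`, the vertical component of the conserved vector `κ_s N + (κ²/2) T`, is
constant on `[0,1]`. As `v` vanishes at both ends, `F = κ'` there; but symmetry makes `κ` even
about `1/2`, so `κ'(1) = -κ'(0)` and hence `F ≡ 0`. Then the energy density `κ² ds/dx = κ²/ρ` is
constant too, and it vanishes at a zero of `v'` given by Rolle's theorem. So `κ ≡ 0`, whence
`v' ≡ 0` and `u ≡ 0` by the boundary values.
-/

open Set

theorem deriv_eq_neg_deriv_const_sub_of_symm {f : ℝ → ℝ} {a : ℝ} (h : ∀ x, f x = f (a - x))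
    (x : ℝ) : deriv f x = -deriv f (a - x) := by
  conv_lhs => rw [show f = fun y => f (a - y) from funext h]
  exact deriv_comp_const_sub f a x

theorem deriv_eq_deriv_const_sub_of_antisymm {f : ℝ → ℝ} {a : ℝ} (h : ∀ x, f x = -f (a - x))
    (x : ℝ) : deriv f x = deriv f (a - x) := by
  conv_lhs => rw [show f = fun y => -f (a - y) from funext h]
  rw [deriv.fun_neg, deriv_comp_const_sub, neg_neg]

theorem constant_of_hasDerivAt_zero_Ioo {f : ℝ → ℝ} {a b : ℝ} (hf : ContinuousOn f (Icc a b))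
    (hf' : ∀ x ∈ Ioo a b, HasDerivAt f 0 x) : ∀ x ∈ Icc a b, f x = f a := by
  rintro x ⟨hax, hxb⟩
  rcases hax.eq_or_lt with rfl | hax
  · rfl
  obtain ⟨c, -, hslope⟩ := exists_hasDerivAt_eq_slope f (fun _ => 0) hax
    (hf.mono (Icc_subset_Icc_right hxb)) fun y hy => hf' y ⟨hy.1, hy.2.trans_le hxb⟩
  rw [eq_comm, div_eq_zero_iff, sub_eq_zero] at hslope
  exact hslope.resolve_right (sub_ne_zero.2 hax.ne')

theorem eq_zero_of_deriv_eq_zero_on_Icc {f : ℝ → ℝ} {a b : ℝ} (hf : Differentiable ℝ f)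
    (hf' : ∀ x ∈ Icc a b, deriv f x = 0) (ha : f a = 0) : ∀ x ∈ Icc a b, f x = 0 := by
  intro x hx
  rw [constant_of_hasDerivAt_zero_Ioo hf.continuous.continuousOn
    (fun y hy => hf' y (Ioo_subset_Icc_self hy) ▸ (hf y).hasDerivAt) x hx, ha]

namespace GraphElastica

-- Every quantity is expressed through the slope `v = u'` of the graph, not through `u`.

noncomputable def cosTangent (v : ℝ → ℝ) (x : ℝ) : ℝ := (1 + v x ^ 2) ^ (-(1/2) : ℝ)

noncomputable def arcDeriv (v f : ℝ → ℝ) (x : ℝ) : ℝ := deriv f x * cosTangent v x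

noncomputable def curvature (v : ℝ → ℝ) (x : ℝ) : ℝ := deriv v x * (1 + v x ^ 2) ^ (-(3/2) : ℝ)

def IsElasticaAt (v : ℝ → ℝ) (x : ℝ) : Prop :=
  arcDeriv v (arcDeriv v (curvature v)) x + curvature v x ^ 3 / 2 = 0

noncomputable def verticalFlux (v : ℝ → ℝ) (x : ℝ) : ℝ :=
  (arcDeriv v (curvature v) x + curvature v x ^ 2 / 2 * v x) * cosTangent v x

noncomputable def energyDensity (v : ℝ → ℝ) (x : ℝ) : ℝ := curvature v x ^ 2 / cosTangent v x

variable {v : ℝ → ℝ} {x : ℝ}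

theorem cosTangent_pos : 0 < cosTangent v x := by
  unfold cosTangent; positivity

theorem cosTangent_sq_mul : cosTangent v x ^ 2 * (1 + v x ^ 2) = 1 := by
  have h : 0 < 1 + v x ^ 2 := by positivity
  rw [cosTangent, ← Real.rpow_mul_natCast h.le, ← Real.rpow_add_one h.ne']
  norm_num

theorem curvature_eq : curvature v x = deriv v x * cosTangent v x ^ 3 := by
  have h : 0 < 1 + v x ^ 2 := by positivity
  rw [curvature, cosTangent, ← Real.rpow_mul_natCast h.le]
  norm_num

theorem cosTangent_eq_one (hx : v x = 0) : cosTangent v x = 1 := by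
  simp [cosTangent, hx]

theorem curvature_eq_zero_iff : curvature v x = 0 ↔ deriv v x = 0 := by
  simp [curvature_eq, cosTangent_pos.ne']

theorem energyDensity_eq_zero_iff : energyDensity v x = 0 ↔ curvature v x = 0 := by
  simp [energyDensity, cosTangent_pos.ne']

theorem verticalFlux_eq_deriv_curvature (hx : v x = 0) :
    verticalFlux v x = deriv (curvature v) x := by
  simp [verticalFlux, arcDeriv, cosTangent_eq_one hx, hx]

theorem curvature_const_sub {a : ℝ} (hv : ∀ x, v x = -v (a - x)) (x : ℝ) :
    curvature v x = curvature v (a - x) := by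
  rw [curvature, curvature, deriv_eq_deriv_const_sub_of_antisymm hv, hv x, neg_sq]

theorem hasDerivAt_cosTangent (hv : DifferentiableAt ℝ v x) :
    HasDerivAt (cosTangent v) (-(v x * deriv v x) * cosTangent v x ^ 3) x := by
  have h : 0 < 1 + v x ^ 2 := by positivity
  have := ((hv.hasDerivAt.fun_pow 2).const_add 1).rpow_const (p := (-(1/2) : ℝ)) (Or.inl h.ne')
  refine this.congr_deriv ?_
  rw [cosTangent, ← Real.rpow_mul_natCast h.le,
    show (-(1/2) : ℝ) - 1 = -(1/2) * (3 : ℕ) by norm_num]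
  push_cast
  ring

theorem contDiff_cosTangent {n : WithTop ℕ∞} (hv : ContDiff ℝ n v) : ContDiff ℝ n (cosTangent v) :=
  (contDiff_const.add (hv.pow 2)).rpow_const_of_ne fun x => by positivity

theorem contDiff_curvature {n : WithTop ℕ∞} (hv : ContDiff ℝ (n + 1) v) :
    ContDiff ℝ n (curvature v) := by
  have : curvature v = fun x => deriv v x * cosTangent v x ^ 3 := funext fun x => curvature_eq
  rw [this]
  exact hv.deriv'.mul ((contDiff_cosTangent hv).of_le le_self_add |>.pow 3)

theorem hasDerivAt_verticalFlux (hv : ContDiff ℝ 3 v) (hE : IsElasticaAt v x) :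
    HasDerivAt (verticalFlux v) 0 x := by
  have hv' : Differentiable ℝ v := hv.differentiable (by norm_num)
  have hκ : ContDiff ℝ 2 (curvature v) := contDiff_curvature hv
  have hq : ContDiff ℝ 1 (arcDeriv v (curvature v)) :=
    hκ.deriv'.mul (contDiff_cosTangent (hv.of_le (by norm_num)))
  have hqD := (hq.differentiable one_ne_zero x).hasDerivAt
  have hκD := (hκ.differentiable two_ne_zero x).hasDerivAt
  have := (hqD.add (((hκD.fun_pow 2).div_const 2).mul (hv' x).hasDerivAt)).mul
    (hasDerivAt_cosTangent (hv' x))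
  refine this.congr_deriv ?_
  rw [IsElasticaAt, arcDeriv] at hE
  simp only [Pi.add_apply, Pi.mul_apply, arcDeriv]
  rw [curvature_eq] at hE ⊢
  linear_combination hE - deriv v x ^ 3 * cosTangent v x ^ 7 / 2 * cosTangent_sq_mul

theorem hasDerivAt_energyDensity (hv : ContDiff ℝ 2 v) (hF : verticalFlux v x = 0) :
    HasDerivAt (energyDensity v) 0 x := by
  have hv' : Differentiable ℝ v := hv.differentiable two_ne_zero
  have hκ : ContDiff ℝ 1 (curvature v) := contDiff_curvature hv
  have hκD := (hκ.differentiable one_ne_zero x).hasDerivAt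
  refine ((hκD.fun_pow 2).div (hasDerivAt_cosTangent (hv' x)) cosTangent_pos.ne').congr_deriv ?_
  have hF' : deriv (curvature v) x * cosTangent v x + curvature v x ^ 2 / 2 * v x = 0 :=
    (mul_eq_zero.1 hF).resolve_right cosTangent_pos.ne'
  rw [div_eq_zero_iff]
  left
  rw [curvature_eq] at hF' ⊢
  linear_combination 2 * deriv v x * cosTangent v x ^ 3 * hF'

theorem continuous_curvature (hv : ContDiff ℝ 1 v) : Continuous (curvature v) :=
  (contDiff_curvature (n := 0) hv).continuous

theorem continuous_verticalFlux (hv : ContDiff ℝ 2 v) : Continuous (verticalFlux v) := by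
  have hκ : ContDiff ℝ 1 (curvature v) := contDiff_curvature hv
  have hρ := (contDiff_cosTangent hv).continuous
  exact (((hκ.continuous_deriv le_rfl).mul hρ).add
    (((hκ.continuous.pow 2).div_const 2).mul hv.continuous)).mul hρ

theorem continuous_energyDensity (hv : ContDiff ℝ 1 v) : Continuous (energyDensity v) :=
  ((continuous_curvature hv).pow 2).div (contDiff_cosTangent hv).continuous
    fun _ => cosTangent_pos.ne'

theorem verticalFlux_eq_zero_of_antisymm (hv : ContDiff ℝ 3 v)
    (hE : ∀ x ∈ Ioo (0:ℝ) 1, IsElasticaAt v x) (hanti : ∀ x, v x = -v (1 - x)) (hv0 : v 0 = 0) :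
    ∀ x ∈ Icc (0:ℝ) 1, verticalFlux v x = 0 := by
  have hconst := constant_of_hasDerivAt_zero_Ioo
    (continuous_verticalFlux (hv.of_le (by norm_num))).continuousOn
    fun x hx => hasDerivAt_verticalFlux hv (hE x hx)
  have hv1 : v 1 = 0 := by simpa [hv0] using hanti 1
  have hodd : deriv (curvature v) 1 = -deriv (curvature v) 0 := by
    simpa using deriv_eq_neg_deriv_const_sub_of_symm (curvature_const_sub hanti) 1
  have hκ'0 : deriv (curvature v) 0 = 0 := by
    have h := hconst 1 (right_mem_Icc.2 zero_le_one)
    rw [verticalFlux_eq_deriv_curvature hv1, verticalFlux_eq_deriv_curvature hv0, hodd] at h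
    linarith
  intro x hx
  rw [hconst x hx, verticalFlux_eq_deriv_curvature hv0, hκ'0]

theorem curvature_eq_zero_of_verticalFlux_eq_zero {a b : ℝ} (hv : ContDiff ℝ 2 v) (hab : a < b)
    (hF : ∀ x ∈ Ioo a b, verticalFlux v x = 0) (ha : v a = 0) (hb : v b = 0) :
    ∀ x ∈ Icc a b, curvature v x = 0 := by
  obtain ⟨c, hc, hvc⟩ := exists_deriv_eq_zero hab hv.continuous.continuousOn (ha.trans hb.symm)
  have hconst := constant_of_hasDerivAt_zero_Ioo
    (continuous_energyDensity (hv.of_le one_le_two)).continuousOn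
    fun x hx => hasDerivAt_energyDensity hv (hF x hx)
  intro x hx
  rw [← energyDensity_eq_zero_iff, hconst x hx, ← hconst c (Ioo_subset_Icc_self hc),
    energyDensity_eq_zero_iff, curvature_eq_zero_iff]
  exact hvc

end GraphElastica

open GraphElastica in
theorem symmetric_dirichlet_solution_trivial_general (u : ℝ → ℝ)
    (hu : ContDiff ℝ 4 u)
    (hsym : ∀ x, u x = u (1 - x))
    (helastica : ∀ x ∈ Set.Ioo (0:ℝ) 1,
        (1 + deriv u x ^ 2) ^ (-(1/2) : ℝ)
            * deriv (fun y =>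
                deriv (fun z => deriv (deriv u) z * (1 + deriv u z ^ 2) ^ (-(3/2) : ℝ)) y
                  * (1 + deriv u y ^ 2) ^ (-(1/2) : ℝ)) x
          + (deriv (deriv u) x * (1 + deriv u x ^ 2) ^ (-(3/2) : ℝ)) ^ 3 / 2 = 0)
    (hu0 : u 0 = 0)
    (hu'0 : deriv u 0 = 0) :
    ∀ x ∈ Set.Icc (0:ℝ) 1, u x = 0 := by
  have hv : ContDiff ℝ 3 (deriv u) := hu.deriv'
  have hanti : ∀ x, deriv u x = -deriv u (1 - x) := deriv_eq_neg_deriv_const_sub_of_symm hsym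
  have hE : ∀ x ∈ Ioo (0:ℝ) 1, IsElasticaAt (deriv u) x := fun x hx => by
    rw [IsElasticaAt, arcDeriv, mul_comm]
    exact helastica x hx
  have hF := verticalFlux_eq_zero_of_antisymm hv hE hanti hu'0
  have hκ := curvature_eq_zero_of_verticalFlux_eq_zero (hv.of_le (by norm_num)) zero_lt_one
    (fun x hx => hF x (Ioo_subset_Icc_self hx)) hu'0 (by simpa [hu'0] using hanti 1)
  have hu' := eq_zero_of_deriv_eq_zero_on_Icc (hv.differentiable (by norm_num))
    (fun x hx => curvature_eq_zero_iff.1 (hκ x hx)) hu'0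
  exact eq_zero_of_deriv_eq_zero_on_Icc (hu.differentiable (by norm_num)) hu' hu0

/-- A symmetric `C⁴` graph solution of the elastica equation with full homogeneous
Dirichlet boundary conditions vanishes identically on `[0,1]`. -/
theorem symmetric_dirichlet_solution_trivial (u : ℝ → ℝ)
    (hu : ContDiff ℝ 4 u)
    (hsym : ∀ x, u x = u (1 - x))
    (helastica : ∀ x ∈ Set.Ioo (0:ℝ) 1,
        (1 + deriv u x ^ 2) ^ (-(1/2) : ℝ)
            * deriv (fun y =>
                deriv (fun z => deriv (deriv u) z * (1 + deriv u z ^ 2) ^ (-(3/2) : ℝ)) y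
                  * (1 + deriv u y ^ 2) ^ (-(1/2) : ℝ)) x
          + (deriv (deriv u) x * (1 + deriv u x ^ 2) ^ (-(3/2) : ℝ)) ^ 3 / 2 = 0)
    (hu0 : u 0 = 0) (hu1 : u 1 = 0)
    (hu'0 : deriv u 0 = 0) (hu'1 : deriv u 1 = 0) :
    ∀ x ∈ Set.Icc (0:ℝ) 1, u x = 0 :=
  symmetric_dirichlet_solution_trivial_general u hu hsym helastica hu0 hu'0
end

section
/- Let κ, k : [0, L] → ℝ be C² functions with κ(0) = k(0) < 0, κ_s(0) = k_s(0) = 0, κ_s(s) > 0 for s ∈ (0, L], κ satisfying κ'' + κ³/2 > 0 on (0,L], and k satisfying k'' + k³/2 = 0. Then κ(s) > k(s) for all s ∈ (0, L]. -/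
/-!
The energy `4 κ_s² + κ⁴` has derivative `8 κ_s (κ_ss + κ³/2)`, so it is constant along the
solution `k` and strictly increasing along the supersolution `κ` while `κ_s > 0`. As both start
with the same energy, `κ` has the larger energy on `(0, L]`; at a point where `κ = k` this forces
`κ_s > |k_s|`, so `w = κ - k` can only cross zero upwards. Where `κ < k` the monotonicity of the
cube gives `w_ss > 0`, so after its last zero `w` cannot become negative either.
-/

open Set

theorem strictMonoOn_Icc_of_hasDerivAt_pos {f f' : ℝ → ℝ} {a b : ℝ}
    (hf : ∀ x, HasDerivAt f (f' x) x) (hpos : ∀ x ∈ Ioo a b, 0 < f' x) :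
    StrictMonoOn f (Icc a b) :=
  strictMonoOn_of_hasDerivWithinAt_pos (convex_Icc a b)
    (fun x _ => (hf x).continuousAt.continuousWithinAt)
    (fun x _ => (hf x).hasDerivWithinAt) (by simpa only [interior_Icc] using hpos)

theorem HasDerivAt.nonpos_of_isMinOn_Icc {f : ℝ → ℝ} {f' a b : ℝ} (hf : HasDerivAt f f' b)
    (hab : a < b) (hmin : IsMinOn f (Icc a b) b) : f' ≤ 0 := by
  have hdir : a - b ∈ posTangentConeAt (Icc a b) b :=
    sub_mem_posTangentConeAt_of_segment_subset (by rw [segment_symm, segment_eq_Icc hab.le])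
  have h := hmin.localize.hasFDerivWithinAt_nonneg hf.hasFDerivAt.hasFDerivWithinAt hdir
  simp only [ContinuousLinearMap.toSpanSingleton_apply, smul_eq_mul] at h
  exact nonpos_of_mul_nonneg_right h (sub_neg.2 hab)

section SecondOrder

variable {w w' w'' : ℝ → ℝ} (hw : ∀ x, HasDerivAt w (w' x) x)
  (hw' : ∀ x, HasDerivAt w' (w'' x) x)
include hw hw'

theorem lt_of_deriv_nonneg_of_deriv2_pos {p q : ℝ} (hpq : p < q) (hp : 0 ≤ w' p)
    (hpos : ∀ x ∈ Ioo p q, 0 < w'' x) : w p < w q := by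
  have hw'_mono := strictMonoOn_Icc_of_hasDerivAt_pos hw' hpos
  refine strictMonoOn_Icc_of_hasDerivAt_pos hw (fun x hx => ?_)
    (left_mem_Icc.2 hpq.le) (right_mem_Icc.2 hpq.le) hpq
  exact hp.trans_lt (hw'_mono (left_mem_Icc.2 hpq.le) (Ioo_subset_Icc_self hx) hx.1)

variable {a b : ℝ} (ha : w a = 0) (ha' : 0 ≤ w' a)
  (hcross : ∀ s ∈ Ioc a b, w s = 0 → 0 < w' s)
  (hconvex : ∀ s ∈ Ioc a b, w s < 0 → 0 < w'' s)
include ha ha' hcross hconvex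

theorem nonneg_of_upward_crossing_of_convex_where_neg : ∀ s ∈ Ioc a b, 0 ≤ w s := by
  intro s₁ hs₁
  by_contra! hneg
  have hcont : Continuous w := continuous_iff_continuousAt.2 fun x => (hw x).continuousAt
  obtain ⟨s₂, ⟨hs₂, hzero⟩, hlast⟩ : ∃ s₂, IsGreatest {x ∈ Icc a s₁ | w x = 0} s₂ :=
    (isCompact_Icc.inter_right (isClosed_eq hcont continuous_const)).exists_isGreatest
      ⟨a, left_mem_Icc.2 hs₁.1.le, ha⟩
  have hs₂₁ : s₂ < s₁ := hs₂.2.lt_of_ne (by rintro rfl; linarith)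
  have hneg_after : ∀ x ∈ Ioo s₂ s₁, w x < 0 := by
    intro x hx
    by_contra! hx0
    obtain ⟨z, hz, hz0⟩ := intermediate_value_Icc' hx.2.le hcont.continuousOn ⟨hneg.le, hx0⟩
    exact (hlast ⟨⟨hs₂.1.trans (hx.1.le.trans hz.1), hz.2⟩, hz0⟩).not_gt (hx.1.trans_le hz.1)
  have hslope : 0 ≤ w' s₂ := by
    rcases hs₂.1.eq_or_lt with rfl | has₂
    · exact ha'
    · exact (hcross s₂ ⟨has₂, hs₂.2.trans hs₁.2⟩ hzero).le
  have hinside : ∀ x ∈ Ioo s₂ s₁, x ∈ Ioc a b := fun x hx =>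
    ⟨hs₂.1.trans_lt hx.1, hx.2.le.trans hs₁.2⟩
  have := lt_of_deriv_nonneg_of_deriv2_pos hw hw' hs₂₁ hslope
    fun x hx => hconvex x (hinside x hx) (hneg_after x hx)
  linarith

theorem pos_of_upward_crossing_of_convex_where_neg : ∀ s ∈ Ioc a b, 0 < w s := by
  intro s hs
  have hnonneg := nonneg_of_upward_crossing_of_convex_where_neg hw hw' ha ha' hcross hconvex
  refine (hnonneg s hs).lt_of_ne fun hzero => ?_
  have hmin : IsMinOn w (Icc a s) s := isMinOn_iff.2 fun x hx => by
    rcases hx.1.eq_or_lt with rfl | hax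
    · rw [ha, ← hzero]
    · exact hzero ▸ hnonneg x ⟨hax, hx.2.trans hs.2⟩
  exact ((hw s).nonpos_of_isMinOn_Icc hs.1 hmin).not_gt (hcross s hs hzero.symm)

end SecondOrder

def elasticEnergy (f f' : ℝ → ℝ) (s : ℝ) : ℝ := 4 * f' s ^ 2 + f s ^ 4

section Energy

variable {f f' f'' : ℝ → ℝ} (hf : ∀ s, HasDerivAt f (f' s) s)
  (hf' : ∀ s, HasDerivAt f' (f'' s) s)
include hf hf'

theorem hasDerivAt_elasticEnergy (s : ℝ) :
    HasDerivAt (elasticEnergy f f') (8 * f' s * (f'' s + f s ^ 3 / 2)) s := by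
  refine ((((hf' s).pow 2).const_mul 4).add ((hf s).pow 4)).congr_deriv ?_
  ring

theorem elasticEnergy_eq_of_solution {a b : ℝ} (hsol : ∀ s ∈ Icc a b, f'' s + f s ^ 3 / 2 = 0) :
    ∀ s ∈ Icc a b, elasticEnergy f f' s = elasticEnergy f f' a := by
  refine constant_of_has_deriv_right_zero
    (fun s _ => (hasDerivAt_elasticEnergy hf hf' s).continuousAt.continuousWithinAt)
    fun s hs => ?_
  simpa only [hsol s (Ico_subset_Icc_self hs), mul_zero] using
    (hasDerivAt_elasticEnergy hf hf' s).hasDerivWithinAt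

theorem strictMonoOn_elasticEnergy_of_supersolution {a b : ℝ}
    (hpos : ∀ s ∈ Ioo a b, 0 < f' s) (hsuper : ∀ s ∈ Ioo a b, 0 < f'' s + f s ^ 3 / 2) :
    StrictMonoOn (elasticEnergy f f') (Icc a b) :=
  strictMonoOn_Icc_of_hasDerivAt_pos (hasDerivAt_elasticEnergy hf hf') fun s hs =>
    mul_pos (mul_pos (by norm_num) (hpos s hs)) (hsuper s hs)

end Energy

theorem deriv_lt_of_eq_of_elasticEnergy_lt {κ κ' k k' : ℝ → ℝ} {s : ℝ} (heq : κ s = k s)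
    (hpos : 0 < κ' s) (hE : elasticEnergy k k' s < elasticEnergy κ κ' s) : k' s < κ' s := by
  simp only [elasticEnergy, heq] at hE
  exact (le_abs_self _).trans_lt (abs_lt_of_sq_lt_sq (by linarith) hpos.le)

theorem lt_of_supersolution_of_lt {x x'' y y'' : ℝ} (hxy : x < y)
    (hsuper : 0 < x'' + x ^ 3 / 2) (hsol : y'' + y ^ 3 / 2 = 0) : y'' < x'' := by
  have hcube : x ^ 3 < y ^ 3 := Odd.strictMono_pow (by decide) hxy
  linarith

theorem curvature_comparison_general (κ κ' κ'' k k' k'' : ℝ → ℝ) (L : ℝ)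
    (hκ : ∀ s, HasDerivAt κ (κ' s) s) (hκ' : ∀ s, HasDerivAt κ' (κ'' s) s)
    (hk : ∀ s, HasDerivAt k (k' s) s) (hk' : ∀ s, HasDerivAt k' (k'' s) s)
    (h0 : κ 0 = k 0)
    (hκ'0 : κ' 0 = 0) (hk'0 : k' 0 = 0)
    (hκ'pos : ∀ s ∈ Set.Ioc 0 L, 0 < κ' s)
    (hsuper : ∀ s ∈ Set.Ioc 0 L, 0 < κ'' s + κ s ^ 3 / 2)
    (hsol : ∀ s ∈ Set.Icc 0 L, k'' s + k s ^ 3 / 2 = 0) :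
    ∀ s ∈ Set.Ioc 0 L, k s < κ s := by
  have henergy : ∀ s ∈ Ioc 0 L, elasticEnergy k k' s < elasticEnergy κ κ' s := by
    intro s hs
    have hIoo : ∀ x ∈ Ioo 0 s, x ∈ Ioc 0 L := fun x hx => ⟨hx.1, hx.2.le.trans hs.2⟩
    calc elasticEnergy k k' s = elasticEnergy k k' 0 :=
          elasticEnergy_eq_of_solution hk hk' hsol s (Ioc_subset_Icc_self hs)
      _ = elasticEnergy κ κ' 0 := by simp only [elasticEnergy, h0, hκ'0, hk'0]
      _ < elasticEnergy κ κ' s :=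
          strictMonoOn_elasticEnergy_of_supersolution hκ hκ'
            (fun x hx => hκ'pos x (hIoo x hx)) (fun x hx => hsuper x (hIoo x hx))
            (left_mem_Icc.2 hs.1.le) (right_mem_Icc.2 hs.1.le) hs.1
  have hcross : ∀ s ∈ Ioc 0 L, κ s - k s = 0 → 0 < κ' s - k' s := fun s hs hzero =>
    sub_pos.2 <| deriv_lt_of_eq_of_elasticEnergy_lt (sub_eq_zero.1 hzero) (hκ'pos s hs)
      (henergy s hs)
  have hconvex : ∀ s ∈ Ioc 0 L, κ s - k s < 0 → 0 < κ'' s - k'' s := fun s hs hneg =>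
    sub_pos.2 <| lt_of_supersolution_of_lt (sub_neg.1 hneg) (hsuper s hs)
      (hsol s (Ioc_subset_Icc_self hs))
  intro s hs
  exact sub_pos.1 <| pos_of_upward_crossing_of_convex_where_neg (w := fun s => κ s - k s)
    (fun s => (hκ s).sub (hk s)) (fun s => (hκ' s).sub (hk' s)) (by rw [h0, sub_self]) (by rw [hκ'0, hk'0, sub_self])
    hcross hconvex s hs

/-- Lemma 2.14 (curvature comparison): if `κ` is a strict supersolution and `k` a solution of
the arclength elastica ODE with the same initial data `κ(0)=k(0)<0`, `κ'(0)=k'(0)=0`, and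
`κ' > 0` on `(0,L]`, then `κ > k` on `(0,L]`. -/
theorem curvature_comparison (κ κ' κ'' k k' k'' : ℝ → ℝ) (L : ℝ) (hL : 0 < L)
    (hκ : ∀ s, HasDerivAt κ (κ' s) s) (hκ' : ∀ s, HasDerivAt κ' (κ'' s) s)
    (hκ''c : Continuous κ'')
    (hk : ∀ s, HasDerivAt k (k' s) s) (hk' : ∀ s, HasDerivAt k' (k'' s) s)
    (hk''c : Continuous k'')
    (h0 : κ 0 = k 0) (hneg : k 0 < 0)
    (hκ'0 : κ' 0 = 0) (hk'0 : k' 0 = 0)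
    (hκ'pos : ∀ s ∈ Set.Ioc 0 L, 0 < κ' s)
    (hsuper : ∀ s ∈ Set.Ioc 0 L, 0 < κ'' s + κ s ^ 3 / 2)
    (hsol : ∀ s ∈ Set.Icc 0 L, k'' s + k s ^ 3 / 2 = 0) :
    ∀ s ∈ Set.Ioc 0 L, k s < κ s :=
  curvature_comparison_general κ κ' κ'' k k' k'' L hκ hκ' hk hk' h0 hκ'0 hk'0 hκ'pos hsuper hsol
end

section
/- The maximum over y ∈ [0, ∞) of the function y ↦ (2 + 2(1+y²)^(-1/4))/(c₀ − G(y)) is attained at the unique solution y₀ ∈ (0, ∞) of y₀(c₀ − G(y₀)) = 2 + 2(1+y₀²)^(-1/4), and the maximal value equals y₀. -/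
open MeasureTheory Set

/-!
Write `D = c₀ - G` and `N y = 2 + 2(1+y²)^(-1/4)`, so that `D' = -g` and `N' = -y g` with
`g = (1+y²)^(-5/4) > 0`. For a solution `a` of `a D(a) = N(a)`, the function `a D - N` has
derivative `(y - a) g(y)`, hence its minimum `0` at `a`; that is, `N ≤ a D` everywhere, so the
maximum of `N / D` is `a`. Such an `a` is a zero of `y D(y) - N(y)`, whose derivative is `D > 0`:
there is exactly one, and it is positive by the intermediate value theorem, because `N ≤ 4` while
`D ≥ ∫_{-∞}^0 g > 0`.
-/

theorem le_of_hasDerivAt_eq_sub_mul {f w : ℝ → ℝ} {a : ℝ}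
    (hf : ∀ x, HasDerivAt f ((x - a) * w x) x) (hw : ∀ x, 0 ≤ w x) (x : ℝ) :
    f a ≤ f x := by
  have hcont : Continuous f := continuous_iff_continuousAt.2 fun x => (hf x).continuousAt
  rcases le_total a x with hax | hxa
  · refine monotoneOn_of_hasDerivWithinAt_nonneg (convex_Ici a) hcont.continuousOn
      (fun x _ => (hf x).hasDerivWithinAt) (fun x hx => ?_) self_mem_Ici hax hax
    rw [interior_Ici] at hx
    exact mul_nonneg (sub_nonneg.2 (le_of_lt hx)) (hw x)
  · refine antitoneOn_of_hasDerivWithinAt_nonpos (convex_Iic a) hcont.continuousOn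
      (fun x _ => (hf x).hasDerivWithinAt) (fun x hx => ?_) hxa self_mem_Iic hxa
    rw [interior_Iic] at hx
    exact mul_nonpos_of_nonpos_of_nonneg (sub_nonpos.2 (le_of_lt hx)) (hw x)

section RatioCriticalPoint

variable {D N w : ℝ → ℝ}

theorem hasDerivAt_id_mul_sub (hD : ∀ y, HasDerivAt D (-w y) y)
    (hN : ∀ y, HasDerivAt N (-(y * w y)) y) (y : ℝ) :
    HasDerivAt (fun y => y * D y - N y) (D y) y :=
  ((hasDerivAt_id y).mul (hD y)).sub (hN y) |>.congr_deriv (by simp only [id]; ring)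

theorem le_mul_of_mul_eq (hD : ∀ y, HasDerivAt D (-w y) y)
    (hN : ∀ y, HasDerivAt N (-(y * w y)) y) (hw : ∀ y, 0 ≤ w y) {a : ℝ}
    (ha : a * D a = N a) (y : ℝ) : N y ≤ a * D y := by
  have hderiv : ∀ x, HasDerivAt (fun x => a * D x - N x) ((x - a) * w x) x := fun x =>
    ((hD x).const_mul a).sub (hN x) |>.congr_deriv (by ring)
  have := le_of_hasDerivAt_eq_sub_mul hderiv hw y
  simp only [ha, sub_self] at this
  linarith

theorem exists_pos_mul_eq (hD : ∀ y, HasDerivAt D (-w y) y)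
    (hN : ∀ y, HasDerivAt N (-(y * w y)) y) {δ M : ℝ} (hδ : 0 < δ) (hDδ : ∀ y, δ ≤ D y)
    (hN0 : 0 < N 0) (hNM : ∀ y, N y ≤ M) : ∃ a, 0 < a ∧ a * D a = N a := by
  set H := fun y => y * D y - N y
  have hH : Continuous H :=
    continuous_iff_continuousAt.2 fun y => (hasDerivAt_id_mul_sub hD hN y).continuousAt
  set R := (M + 1) / δ
  have hR : 0 < R := div_pos (by linarith [hNM 0]) hδ
  have hHR : 0 < H R := by
    have : M + 1 ≤ R * D R := by
      calc M + 1 = R * δ := (div_mul_cancel₀ _ hδ.ne').symm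
        _ ≤ R * D R := mul_le_mul_of_nonneg_left (hDδ R) hR.le
    linarith [hNM R]
  have hH0 : H 0 < 0 := by simpa only [H, zero_mul, zero_sub, neg_neg_iff_pos] using hN0
  obtain ⟨a, ha, hHa⟩ := intermediate_value_Ioo hR.le hH.continuousOn ⟨hH0, hHR⟩
  exact ⟨a, ha.1, sub_eq_zero.1 hHa⟩

end RatioCriticalPoint

namespace AverageSlope

noncomputable def g (τ : ℝ) : ℝ := (1 + τ ^ 2) ^ (-(5/4) : ℝ)

noncomputable def N (y : ℝ) : ℝ := 2 + 2 * (1 + y ^ 2) ^ (-(1/4) : ℝ)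

theorem g_pos (τ : ℝ) : 0 < g τ := by unfold g; positivity

theorem continuous_g : Continuous g :=
  (by fun_prop : Continuous fun τ : ℝ => 1 + τ ^ 2).rpow_const fun τ => Or.inl (by positivity)

theorem integrable_g : Integrable g := by
  refine integrable_inv_one_add_sq.mono continuous_g.aestronglyMeasurable
    (Filter.Eventually.of_forall fun τ => ?_)
  have h1 : (1 : ℝ) ≤ 1 + τ ^ 2 := le_add_of_nonneg_right (sq_nonneg τ)
  rw [Real.norm_of_nonneg (g_pos τ).le, Real.norm_of_nonneg (by positivity), ← Real.rpow_neg_one]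
  exact Real.rpow_le_rpow_of_exponent_le h1 (by norm_num)

theorem hasDerivAt_c0_sub_G (y : ℝ) : HasDerivAt (fun y => c0 - G y) (-g y) y :=
  (intervalIntegral.integral_hasDerivAt_right integrable_g.intervalIntegrable
    continuous_g.aestronglyMeasurable.stronglyMeasurableAtFilter
    continuous_g.continuousAt).const_sub c0

theorem setIntegral_Iic_pos : 0 < ∫ τ in Iic (0 : ℝ), g τ := by
  refine (setIntegral_pos_iff_support_of_nonneg_ae
    (Filter.Eventually.of_forall fun τ => (g_pos τ).le) integrable_g.integrableOn).2 ?_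
  rw [Function.support_eq_univ fun τ => (g_pos τ).ne', univ_inter, Real.volume_Iic]
  exact ENNReal.zero_lt_top

theorem G_le_setIntegral_Ioi (y : ℝ) : G y ≤ ∫ τ in Ioi (0 : ℝ), g τ := by
  have hpos : 0 ≤ ∫ τ in Ioc y 0, g τ :=
    setIntegral_nonneg measurableSet_Ioc fun τ _ => (g_pos τ).le
  have hsub : ∫ τ in Ioc 0 y, g τ ≤ ∫ τ in Ioi (0 : ℝ), g τ :=
    setIntegral_mono_set integrable_g.integrableOn
      (Filter.Eventually.of_forall fun τ => (g_pos τ).le) Ioc_subset_Ioi_self.eventuallyLE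
  have hG : G y = (∫ τ in Ioc 0 y, g τ) - ∫ τ in Ioc y 0, g τ := rfl
  linarith

theorem setIntegral_Iic_le_c0_sub_G (y : ℝ) : ∫ τ in Iic (0 : ℝ), g τ ≤ c0 - G y := by
  have hsplit : (∫ τ in Iic (0 : ℝ), g τ) + ∫ τ in Ioi (0 : ℝ), g τ = c0 :=
    intervalIntegral.integral_Iic_add_Ioi integrable_g.integrableOn integrable_g.integrableOn
  linarith [G_le_setIntegral_Ioi y]

theorem c0_sub_G_pos (y : ℝ) : 0 < c0 - G y :=
  setIntegral_Iic_pos.trans_le (setIntegral_Iic_le_c0_sub_G y)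

theorem hasDerivAt_N (y : ℝ) : HasDerivAt N (-(y * g y)) y := by
  have hbase : HasDerivAt (fun y : ℝ => 1 + y ^ 2) (2 * y) y := by
    simpa using (hasDerivAt_pow 2 y).const_add 1
  refine ((hbase.rpow_const (p := -(1/4)) (Or.inl (by positivity))).const_mul 2).const_add 2
    |>.congr_deriv ?_
  rw [g, show (-(1/4) : ℝ) - 1 = -(5/4) by norm_num]
  ring

theorem N_pos (y : ℝ) : 0 < N y := by unfold N; positivity

theorem N_le_four (y : ℝ) : N y ≤ 4 := by
  have : (1 + y ^ 2) ^ (-(1/4) : ℝ) ≤ 1 :=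
    Real.rpow_le_one_of_one_le_of_nonpos (le_add_of_nonneg_right (sq_nonneg y)) (by norm_num)
  unfold N
  linarith

end AverageSlope

open AverageSlope in
/-- The maximum of `y ↦ (2+2(1+y²)^{-1/4})/(c₀ − G(y))` over `[0,∞)` is attained at the
unique positive solution `y₀` of `y₀(c₀ − G(y₀)) = 2+2(1+y₀²)^{-1/4}`, with maximal value `y₀`. -/
theorem max_average_slope :
    ∃ y₀ : ℝ, 0 < y₀ ∧
      y₀ * (c0 - G y₀) = 2 + 2 * (1 + y₀ ^ 2) ^ (-(1/4) : ℝ) ∧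
      (∀ y : ℝ, 0 < y → y * (c0 - G y) = 2 + 2 * (1 + y ^ 2) ^ (-(1/4) : ℝ) → y = y₀) ∧
      (∀ y ∈ Set.Ici (0:ℝ),
        (2 + 2 * (1 + y ^ 2) ^ (-(1/4) : ℝ)) / (c0 - G y)
          ≤ (2 + 2 * (1 + y₀ ^ 2) ^ (-(1/4) : ℝ)) / (c0 - G y₀)) ∧
      (2 + 2 * (1 + y₀ ^ 2) ^ (-(1/4) : ℝ)) / (c0 - G y₀) = y₀ := by
  obtain ⟨y₀, hy₀, hfix⟩ := exists_pos_mul_eq hasDerivAt_c0_sub_G hasDerivAt_N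
    setIntegral_Iic_pos setIntegral_Iic_le_c0_sub_G (N_pos 0) N_le_four
  have hval : N y₀ / (c0 - G y₀) = y₀ := by
    rw [← hfix, mul_div_cancel_right₀ _ (c0_sub_G_pos y₀).ne']
  have hinj := (strictMono_of_hasDerivAt_pos
    (hasDerivAt_id_mul_sub hasDerivAt_c0_sub_G hasDerivAt_N) c0_sub_G_pos).injective
  refine ⟨y₀, hy₀, hfix, fun y _ hy => hinj ?_, fun y _ => ?_, hval⟩
  · change y * (c0 - G y) - N y = y₀ * (c0 - G y₀) - N y₀
    rw [hfix, sub_self]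
    exact sub_eq_zero.2 hy
  · change N y / (c0 - G y) ≤ N y₀ / (c0 - G y₀)
    rw [hval, div_le_iff₀ (c0_sub_G_pos y)]
    exact le_mul_of_mul_eq hasDerivAt_c0_sub_G hasDerivAt_N (fun y => (g_pos y).le) hfix y
end

section
/- Let u ∈ H²((-1,1);(0,∞)) be even with u(±1) = α > 0 and u'(±1) = 0, and suppose W(u) < 4π, where W is the Willmore energy of the surface of revolution generated by u. Then for all x ∈ [-1,1], |u'(x)| ≤ ((4π/W(u))² − 1)^(-1/2). -/
/-!
Write `r = √(1 + u'²)`, `s = u r` and `κ = u'' r⁻³` for the curvature of the profile curve. The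
integrand is `(1/s - κ)² s`, and `κ` is the derivative of `ψ = sin (arctan u') = u' / r`.
Pointwise, `(1/s - κ)² s + 4κ = (1/s + κ)² s ≥ 0` and `(1/s - κ)² s = 1/s - 2κ + κ² s`.
Integrating the first identity bounds the energy of `[a, b]` below by `4 (ψ a - ψ b)`; as `ψ` is
odd and vanishes at `±1`, splitting `[-1, 1]` at `±|x|` gives `∫ ≥ 8 |ψ x|`, that is
`W ≥ 4π |u' x| / √(1 + u' x²)`, which rearranges to the bound once `W < 4π`. The second identity
gives `∫ ≥ ∫ 1/s > 0`, hence `W > 0`.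
-/

open MeasureTheory Real Set

lemma neg_four_mul_le_sq_mul {s : ℝ} (hs : 0 < s) (κ : ℝ) : -4 * κ ≤ (1 / s - κ) ^ 2 * s := by
  have h : (1 / s - κ) ^ 2 * s + 4 * κ = (1 / s + κ) ^ 2 * s := by field_simp; ring
  nlinarith [mul_nonneg (sq_nonneg (1 / s + κ)) hs.le]

lemma one_div_sub_two_mul_le_sq_mul {s : ℝ} (hs : 0 < s) (κ : ℝ) :
    1 / s - 2 * κ ≤ (1 / s - κ) ^ 2 * s := by
  have h : (1 / s - κ) ^ 2 * s = 1 / s - 2 * κ + κ ^ 2 * s := by field_simp; ring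
  nlinarith [mul_nonneg (sq_nonneg κ) hs.le]

lemma hasDerivAt_sin_arctan {f : ℝ → ℝ} {f' x : ℝ} (hf : HasDerivAt f f' x) :
    HasDerivAt (fun y => sin (arctan (f y))) (f' * (1 + f x ^ 2) ^ (-(3 / 2) : ℝ)) x := by
  refine hf.arctan.sin.congr_deriv ?_
  have hq : 0 < 1 + f x ^ 2 := by positivity
  rw [cos_arctan, sqrt_eq_rpow, show (-(3 / 2) : ℝ) = -(1 / 2) - 1 by norm_num,
    rpow_sub hq, rpow_neg hq.le, rpow_one]
  ring

lemma odd_of_even_of_hasDerivAt {u u' : ℝ → ℝ} (heven : ∀ x, u x = u (-x))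
    (hu : ∀ x, HasDerivAt u (u' x) x) (x : ℝ) : u' (-x) = -u' x := by
  have h : HasDerivAt (fun y => u (-y)) (u' (-x) * -1) x := (hu (-x)).comp x (hasDerivAt_neg' x)
  rw [show (fun y => u (-y)) = u from funext fun y => (heven y).symm] at h
  linarith [h.unique (hu x)]

lemma sub_le_integral_of_hasDerivAt_of_le {g g' φ : ℝ → ℝ} {a b : ℝ} (hab : a ≤ b)
    (hg : ∀ x ∈ Icc a b, HasDerivAt g (g' x) x) (hφ : IntervalIntegrable φ volume a b)
    (hle : ∀ x ∈ Ioo a b, g' x ≤ φ x) : g b - g a ≤ ∫ x in a..b, φ x :=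
  intervalIntegral.sub_le_integral_of_hasDeriv_right_of_le hab
    (fun x hx => (hg x hx).continuousAt.continuousWithinAt)
    (fun x hx => (hg x (Ioo_subset_Icc_self hx)).hasDerivWithinAt)
    ((intervalIntegrable_iff_integrableOn_Icc_of_le hab).1 hφ) hle

lemma abs_le_of_mul_abs_sin_arctan_le {p W K : ℝ} (hW : 0 < W) (hWK : W < K)
    (h : K * |sin (arctan p)| ≤ W) : |p| ≤ ((K / W) ^ 2 - 1) ^ (-(1 / 2) : ℝ) := by
  have hK : 0 < K := hW.trans hWK
  have hr : 0 < √(1 + p ^ 2) := by positivity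
  have hKp : K * |p| ≤ W * √(1 + p ^ 2) := by
    rwa [sin_arctan, abs_div, abs_of_pos hr, mul_div_assoc', div_le_iff₀ hr] at h
  have hsq : K ^ 2 * p ^ 2 ≤ W ^ 2 * (1 + p ^ 2) := by
    have := pow_le_pow_left₀ (by positivity) hKp 2
    rwa [mul_pow, mul_pow, sq_abs, sq_sqrt (by positivity)] at this
  have hpos : 0 < (K / W) ^ 2 - 1 := by
    rw [sub_pos, one_lt_sq_iff₀ (by positivity), one_lt_div hW]; exact hWK
  rw [rpow_neg hpos.le, ← sqrt_eq_rpow, ← sqrt_inv]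
  refine abs_le_sqrt ?_
  rw [← one_div, le_div_iff₀ hpos, div_pow, mul_sub, mul_one, mul_div_assoc',
    sub_le_iff_le_add, div_le_iff₀ (by positivity)]
  linarith

lemma eight_mul_abs_le_of_odd {Ψ ψ : ℝ → ℝ} (hodd : ∀ x, ψ (-x) = -ψ x) (hψ : ψ 1 = 0)
    (hΨ : ∀ a ∈ Icc (-1 : ℝ) 1, ∀ b ∈ Icc (-1 : ℝ) 1, a ≤ b →
      0 ≤ Ψ b - Ψ a ∧ 4 * (ψ a - ψ b) ≤ Ψ b - Ψ a)
    {x : ℝ} (hx : x ∈ Icc (-1 : ℝ) 1) : 8 * |ψ x| ≤ Ψ 1 - Ψ (-1) := by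
  obtain ⟨t, ⟨ht0, ht1⟩, habs⟩ : ∃ t ∈ Icc (0 : ℝ) 1, |ψ x| = |ψ t| := by
    refine ⟨|x|, ⟨abs_nonneg x, abs_le.2 hx⟩, ?_⟩
    rcases abs_choice x with h | h <;> rw [h]
    rw [hodd, abs_neg]
  have hψm1 : ψ (-1) = 0 := by rw [hodd, hψ, neg_zero]
  have hmt : -t ∈ Icc (-1 : ℝ) 1 := ⟨by linarith, by linarith⟩
  have ht : t ∈ Icc (-1 : ℝ) 1 := ⟨by linarith, ht1⟩
  have hleft := hΨ (-1) (by norm_num) (-t) hmt (by linarith)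
  have hmid := hΨ (-t) hmt t ht (by linarith)
  have hright := hΨ t ht 1 (by norm_num) ht1
  rw [hodd t] at hleft hmid
  rw [habs]
  rcases abs_cases (ψ t) with ⟨h, _⟩ | ⟨h, _⟩ <;> rw [h] <;> linarith

noncomputable def willmoreIntegrand (u u' u'' : ℝ → ℝ) (x : ℝ) : ℝ :=
  (1 / (u x * √(1 + u' x ^ 2)) - u'' x * (1 + u' x ^ 2) ^ (-(3 / 2) : ℝ)) ^ 2
    * u x * √(1 + u' x ^ 2)

section Willmore

variable {u u' u'' : ℝ → ℝ}

lemma willmoreIntegrand_eq (x : ℝ) :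
    willmoreIntegrand u u' u'' x =
      (1 / (u x * √(1 + u' x ^ 2)) - u'' x * (1 + u' x ^ 2) ^ (-(3 / 2) : ℝ)) ^ 2
        * (u x * √(1 + u' x ^ 2)) := by
  rw [willmoreIntegrand, mul_assoc]

lemma willmoreIntegrand_nonneg {x : ℝ} (hx : 0 ≤ u x) : 0 ≤ willmoreIntegrand u u' u'' x := by
  rw [willmoreIntegrand_eq]
  positivity

lemma four_mul_sub_sin_arctan_le_integral_willmoreIntegrand
    (hu' : ∀ x, HasDerivAt u' (u'' x) x) (hpos : ∀ x ∈ Icc (-1 : ℝ) 1, 0 < u x)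
    (hW : IntervalIntegrable (willmoreIntegrand u u' u'') volume (-1) 1) {a b : ℝ} (ha : -1 ≤ a)
    (hab : a ≤ b) (hb : b ≤ 1) :
    4 * (sin (arctan (u' a)) - sin (arctan (u' b))) ≤
      ∫ x in a..b, willmoreIntegrand u u' u'' x := by
  have hsub : uIcc a b ⊆ uIcc (-1) 1 := by
    rw [uIcc_of_le hab, uIcc_of_le (by norm_num)]
    exact Icc_subset_Icc ha hb
  have := sub_le_integral_of_hasDerivAt_of_le hab
    (fun x _ => (hasDerivAt_sin_arctan (hu' x)).const_mul (-4)) (hW.mono_set hsub)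
    fun x hx => by
      rw [willmoreIntegrand_eq]
      exact neg_four_mul_le_sq_mul (mul_pos (hpos x ⟨by linarith [hx.1], by linarith [hx.2]⟩)
        (sqrt_pos.2 (by positivity))) _
  linarith

lemma integral_willmoreIntegrand_pos (hu : ∀ x, HasDerivAt u (u' x) x)
    (hu' : ∀ x, HasDerivAt u' (u'' x) x) (hpos : ∀ x ∈ Icc (-1 : ℝ) 1, 0 < u x)
    (hW : IntervalIntegrable (willmoreIntegrand u u' u'') volume (-1) 1)
    (hslope : u' (-1) = u' 1) : 0 < ∫ x in (-1)..1, willmoreIntegrand u u' u'' x := by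
  set ρ : ℝ → ℝ := fun x => 1 / (u x * √(1 + u' x ^ 2))
  have hρ : IntervalIntegrable ρ volume (-1) 1 := by
    refine ContinuousOn.intervalIntegrable fun x hx => ?_
    rw [uIcc_of_le (by norm_num)] at hx
    have hcont : ContinuousAt (fun x => u x * √(1 + u' x ^ 2)) x :=
      (hu x).continuousAt.mul ((hu' x).continuousAt.pow 2 |>.const_add 1 |>.sqrt)
    exact (continuousAt_const.div hcont
      (mul_pos (hpos x hx) (sqrt_pos.2 (by positivity))).ne').continuousWithinAt
  have hρpos : 0 < ∫ x in (-1)..1, ρ x :=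
    intervalIntegral.intervalIntegral_pos_of_pos_on hρ
      (fun x hx => by have := hpos x (Ioo_subset_Icc_self hx); positivity) (by norm_num)
  have hgap := sub_le_integral_of_hasDerivAt_of_le (by norm_num)
    (fun x _ => (hasDerivAt_sin_arctan (hu' x)).const_mul (-2)) (hW.sub hρ)
    fun x hx => by
      have hs : 0 < u x * √(1 + u' x ^ 2) :=
        mul_pos (hpos x (Ioo_subset_Icc_self hx)) (sqrt_pos.2 (by positivity))
      have := one_div_sub_two_mul_le_sq_mul hs (u'' x * (1 + u' x ^ 2) ^ (-(3 / 2) : ℝ))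
      rw [willmoreIntegrand_eq]
      linarith
  rw [hslope, sub_self, intervalIntegral.integral_sub hW hρ] at hgap
  linarith

lemma eight_mul_abs_sin_arctan_le_integral_willmoreIntegrand
    (hu : ∀ x, HasDerivAt u (u' x) x) (hu' : ∀ x, HasDerivAt u' (u'' x) x)
    (hpos : ∀ x ∈ Icc (-1 : ℝ) 1, 0 < u x)
    (hW : IntervalIntegrable (willmoreIntegrand u u' u'') volume (-1) 1)
    (heven : ∀ x, u x = u (-x)) (hslope : u' 1 = 0) {x : ℝ} (hx : x ∈ Icc (-1 : ℝ) 1) :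
    8 * |sin (arctan (u' x))| ≤ ∫ x in (-1)..1, willmoreIntegrand u u' u'' x := by
  have hodd : ∀ x, sin (arctan (u' (-x))) = -sin (arctan (u' x)) := fun x => by
    rw [odd_of_even_of_hasDerivAt heven hu, arctan_neg, sin_neg]
  have hint : ∀ b ∈ Icc (-1 : ℝ) 1, IntervalIntegrable (willmoreIntegrand u u' u'') volume (-1) b :=
    fun b hb => hW.mono_set (by
      rw [uIcc_of_le hb.1, uIcc_of_le (by norm_num)]; exact Icc_subset_Icc le_rfl hb.2)
  have h := eight_mul_abs_le_of_odd (ψ := fun y => sin (arctan (u' y)))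
    (Ψ := fun b => ∫ x in (-1)..b, willmoreIntegrand u u' u'' x)
    hodd (by rw [hslope, arctan_zero, sin_zero]) (fun a ha b hb hab => by
      rw [intervalIntegral.integral_interval_sub_left (hint b hb) (hint a ha)]
      exact ⟨intervalIntegral.integral_nonneg hab fun y hy =>
          willmoreIntegrand_nonneg (hpos y ⟨ha.1.trans hy.1, hy.2.trans hb.2⟩).le,
        four_mul_sub_sin_arctan_le_integral_willmoreIntegrand hu' hpos hW ha.1 hab hb.2⟩) hx
  simpa using h

end Willmore

theorem willmore_gradient_bound_general (u u' u'' : ℝ → ℝ)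
    (hu : ∀ x, HasDerivAt u (u' x) x)
    (hu' : ∀ x, HasDerivAt u' (u'' x) x)
    (hpos : ∀ x ∈ Set.Icc (-1:ℝ) 1, 0 < u x)
    (heven : ∀ x, u x = u (-x))
    (hb3 : u' 1 = 0) (hb4 : u' (-1) = 0)
    (hWint : IntervalIntegrable (fun x =>
        (1 / (u x * Real.sqrt (1 + u' x ^ 2)) - u'' x * (1 + u' x ^ 2) ^ (-(3/2) : ℝ)) ^ 2
          * u x * Real.sqrt (1 + u' x ^ 2)) volume (-1) 1)
    (hW : (π / 2) * ∫ x in (-1:ℝ)..1,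
        (1 / (u x * Real.sqrt (1 + u' x ^ 2)) - u'' x * (1 + u' x ^ 2) ^ (-(3/2) : ℝ)) ^ 2
          * u x * Real.sqrt (1 + u' x ^ 2) < 4 * π) :
    ∀ x ∈ Set.Icc (-1:ℝ) 1,
      |u' x| ≤ ((4 * π / ((π / 2) * ∫ x in (-1:ℝ)..1,
        (1 / (u x * Real.sqrt (1 + u' x ^ 2)) - u'' x * (1 + u' x ^ 2) ^ (-(3/2) : ℝ)) ^ 2
          * u x * Real.sqrt (1 + u' x ^ 2))) ^ 2 - 1) ^ (-(1/2) : ℝ) := by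
  intro x hx
  have hI := integral_willmoreIntegrand_pos hu hu' hpos hWint (hb4.trans hb3.symm)
  have h8 :=
    eight_mul_abs_sin_arctan_le_integral_willmoreIntegrand hu hu' hpos hWint heven hb3 hx
  refine abs_le_of_mul_abs_sin_arctan_le (mul_pos (by positivity) hI) hW ?_
  calc 4 * π * |sin (arctan (u' x))| = π / 2 * (8 * |sin (arctan (u' x))|) := by ring
    _ ≤ _ := mul_le_mul_of_nonneg_left h8 (by positivity)

/-- Lemma 3.2, first part: gradient bound for profile curves with Willmore energy below `4π`. -/
theorem willmore_gradient_bound (u u' u'' : ℝ → ℝ) (α : ℝ) (hα : 0 < α)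
    (hu : ∀ x, HasDerivAt u (u' x) x)
    (hu' : ∀ x, HasDerivAt u' (u'' x) x)
    (hu'c : Continuous u')
    (hpos : ∀ x ∈ Set.Icc (-1:ℝ) 1, 0 < u x)
    (heven : ∀ x, u x = u (-x))
    (hb1 : u 1 = α) (hb2 : u (-1) = α) (hb3 : u' 1 = 0) (hb4 : u' (-1) = 0)
    (hWint : IntervalIntegrable (fun x =>
        (1 / (u x * Real.sqrt (1 + u' x ^ 2)) - u'' x * (1 + u' x ^ 2) ^ (-(3/2) : ℝ)) ^ 2
          * u x * Real.sqrt (1 + u' x ^ 2)) volume (-1) 1)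
    (hW : (π / 2) * ∫ x in (-1:ℝ)..1,
        (1 / (u x * Real.sqrt (1 + u' x ^ 2)) - u'' x * (1 + u' x ^ 2) ^ (-(3/2) : ℝ)) ^ 2
          * u x * Real.sqrt (1 + u' x ^ 2) < 4 * π) :
    ∀ x ∈ Set.Icc (-1:ℝ) 1,
      |u' x| ≤ ((4 * π / ((π / 2) * ∫ x in (-1:ℝ)..1,
        (1 / (u x * Real.sqrt (1 + u' x ^ 2)) - u'' x * (1 + u' x ^ 2) ^ (-(3/2) : ℝ)) ^ 2
          * u x * Real.sqrt (1 + u' x ^ 2))) ^ 2 - 1) ^ (-(1/2) : ℝ) :=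
  willmore_gradient_bound_general u u' u'' hu hu' hpos heven hb3 hb4 hWint hW
end

section
/- Let u ∈ H²((-1,1);(0,∞)) satisfy u(±1) = α > 0, u'(±1) = 0, and |u'(x)| ≤ K on [-1,1] for some K > 0. Then for all x ∈ [-1,1], u(x) ≥ K/(exp((2K/π)√(1+K²) · W(u)) − 1), where W(u) = (π/2)∫_{-1}^1 u u''²(1+u'²)^(-5/2) dx + (π/2)∫_{-1}^1 (u√(1+u'²))^(-1) dx. -/
/-!
The curvature term of `W` is nonnegative, so `W` is at least `(π/2) ∫ (u √(1 + u'²))⁻¹`. The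
derivative bound gives `u x ≤ u x₀ + K |x - x₀|` and `√(1 + u'²) ≤ √(1 + K²)`, so this integral
dominates `(1 + K²)^(-1/2) ∫ (u x₀ + K |x - x₀|)⁻¹`. One of the unit intervals `[x₀ - 1, x₀]`,
`[x₀, x₀ + 1]` lies in `[-1, 1]`, hence the last integral is at least `K⁻¹ log (1 + K / u x₀)`,
and solving for `u x₀` gives the bound.
-/

open MeasureTheory Real Set

theorem le_add_mul_abs_sub_of_abs_deriv_le {u u' : ℝ → ℝ} {s : Set ℝ} {K x₀ x : ℝ}
    (hs : Convex ℝ s) (hu : ∀ y ∈ s, HasDerivWithinAt u (u' y) s y) (hK : ∀ y ∈ s, |u' y| ≤ K)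
    (hx₀ : x₀ ∈ s) (hx : x ∈ s) :
    u x ≤ u x₀ + K * |x - x₀| := by
  have h := hs.norm_image_sub_le_of_norm_hasDerivWithin_le hu hK hx₀ hx
  rw [Real.norm_eq_abs, Real.norm_eq_abs] at h
  linarith [le_abs_self (u x - u x₀)]

theorem inv_le_sqrt_one_add_sq_mul_inv {v w p K : ℝ} (hv : 0 < v) (hvw : v ≤ w) (hp : |p| ≤ K) :
    w⁻¹ ≤ √(1 + K ^ 2) * (v * √(1 + p ^ 2))⁻¹ := by
  have hp2 : p ^ 2 ≤ K ^ 2 := by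
    rw [← sq_abs]; exact pow_le_pow_left₀ (abs_nonneg p) hp 2
  have hw : 0 < w := hv.trans_le hvw
  rw [← div_eq_mul_inv, le_div_iff₀ (by positivity), inv_mul_le_iff₀ hw]
  gcongr

theorem integral_inv_add_mul_abs_of_nonneg {m K b : ℝ} (hm : 0 < m) (hK : 0 < K) (hb : 0 ≤ b) :
    ∫ t in (0:ℝ)..b, (m + K * |t|)⁻¹ = K⁻¹ * log ((m + K * b) / m) := by
  calc ∫ t in (0:ℝ)..b, (m + K * |t|)⁻¹ = ∫ t in (0:ℝ)..b, (m + K * t)⁻¹ :=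
        intervalIntegral.integral_congr fun t ht => by
          rw [uIcc_of_le hb] at ht
          simp only [abs_of_nonneg ht.1]
    _ = K⁻¹ * log ((m + K * b) / m) := by
        rw [intervalIntegral.integral_comp_add_mul (fun x => x⁻¹) hK.ne', mul_zero, add_zero,
          integral_inv_of_pos hm (by positivity), smul_eq_mul]

theorem integral_inv_add_mul_abs {m K a b : ℝ} (hm : 0 < m) (hK : 0 < K) (ha : a ≤ 0)
    (hb : 0 ≤ b) :
    ∫ t in a..b, (m + K * |t|)⁻¹ = K⁻¹ * (log ((m + K * b) / m) + log ((m - K * a) / m)) := by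
  have hcont : Continuous fun t : ℝ => (m + K * |t|)⁻¹ :=
    Continuous.inv₀ (by fun_prop) fun t => by positivity
  have hreflect : ∫ t in a..0, (m + K * |t|)⁻¹ = ∫ t in (0:ℝ)..-a, (m + K * |t|)⁻¹ := by
    simpa only [abs_neg, neg_neg, neg_zero] using
      (intervalIntegral.integral_comp_neg (a := 0) (b := -a) fun t => (m + K * |t|)⁻¹).symm
  rw [← intervalIntegral.integral_add_adjacent_intervals (b := 0) (hcont.intervalIntegrable _ _)
    (hcont.intervalIntegrable _ _), hreflect, integral_inv_add_mul_abs_of_nonneg hm hK hb,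
    integral_inv_add_mul_abs_of_nonneg hm hK (neg_nonneg.2 ha)]
  ring_nf

theorem log_div_le_mul_integral_inv_add_mul_abs_sub {m K x₀ : ℝ} (hm : 0 < m) (hK : 0 < K)
    (hx₀ : x₀ ∈ Icc (-1:ℝ) 1) :
    log ((m + K) / m) ≤ K * ∫ x in (-1:ℝ)..1, (m + K * |x - x₀|)⁻¹ := by
  obtain ⟨hl, hr⟩ := hx₀
  rw [intervalIntegral.integral_comp_sub_right (fun t => (m + K * |t|)⁻¹),
    integral_inv_add_mul_abs hm hK (by linarith) (by linarith), ← mul_assoc,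
    mul_inv_cancel₀ hK.ne', one_mul, show m - K * (-1 - x₀) = m + K * (1 + x₀) by ring]
  have hlog_nonneg : ∀ y, 0 ≤ y → 0 ≤ log ((m + K * y) / m) := fun y hy =>
    log_nonneg ((one_le_div hm).2 (by nlinarith))
  have hlog_mono : ∀ y, 1 ≤ y → log ((m + K) / m) ≤ log ((m + K * y) / m) := fun y hy =>
    log_le_log (by positivity) (by gcongr; nlinarith)
  rcases le_total x₀ 0 with h | h
  · linarith [hlog_mono (1 - x₀) (by linarith), hlog_nonneg (1 + x₀) (by linarith)]
  · linarith [hlog_nonneg (1 - x₀) (by linarith), hlog_mono (1 + x₀) (by linarith)]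

theorem div_exp_sub_one_le_of_log_div_le {m K c : ℝ} (hm : 0 < m) (hK : 0 < K)
    (hc : log ((m + K) / m) ≤ c) : K / (exp c - 1) ≤ m := by
  rw [log_le_iff_le_exp (by positivity), add_div, div_self hm.ne'] at hc
  have hKm : K ≤ m * (exp c - 1) := (div_le_iff₀' hm).1 (by linarith)
  rw [div_le_iff₀ (by nlinarith)]
  linarith

theorem willmore_lower_bound_general (u u' u'' : ℝ → ℝ) (K : ℝ) (hK : 0 < K)
    (hu : ∀ x, HasDerivAt u (u' x) x)
    (hpos : ∀ x ∈ Set.Icc (-1:ℝ) 1, 0 < u x)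
    (hlip : ∀ x ∈ Set.Icc (-1:ℝ) 1, |u' x| ≤ K)
    (hint2 : IntervalIntegrable (fun x =>
        (u x * Real.sqrt (1 + u' x ^ 2))⁻¹) volume (-1) 1) :
    ∀ x ∈ Set.Icc (-1:ℝ) 1,
      K / (Real.exp ((2 * K / π) * Real.sqrt (1 + K ^ 2) *
          ((π / 2) * (∫ x in (-1:ℝ)..1, u x * u'' x ^ 2 * (1 + u' x ^ 2) ^ (-(5/2) : ℝ))
            + (π / 2) * ∫ x in (-1:ℝ)..1, (u x * Real.sqrt (1 + u' x ^ 2))⁻¹)) - 1)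
        ≤ u x := by
  intro x₀ hx₀
  set I₁ := ∫ x in (-1:ℝ)..1, u x * u'' x ^ 2 * (1 + u' x ^ 2) ^ (-(5/2) : ℝ)
  set I₂ := ∫ x in (-1:ℝ)..1, (u x * √(1 + u' x ^ 2))⁻¹
  have hm := hpos x₀ hx₀
  have hI₁ : 0 ≤ I₁ := intervalIntegral.integral_nonneg (by norm_num) fun x hx => by
    have := (hpos x hx).le
    positivity
  have hlog : log ((u x₀ + K) / u x₀) ≤ K * (√(1 + K ^ 2) * I₂) := by
    rw [← intervalIntegral.integral_const_mul]
    refine (log_div_le_mul_integral_inv_add_mul_abs_sub hm hK hx₀).trans ?_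
    gcongr
    refine intervalIntegral.integral_mono_on (by norm_num) ?_ (hint2.const_mul _) fun x hx =>
      inv_le_sqrt_one_add_sq_mul_inv (hpos x hx) ?_ (hlip x hx)
    · exact (Continuous.inv₀ (by fun_prop) fun x => by positivity).intervalIntegrable _ _
    · exact le_add_mul_abs_sub_of_abs_deriv_le (convex_Icc _ _)
        (fun y _ => (hu y).hasDerivWithinAt) hlip hx₀ hx
  refine div_exp_sub_one_le_of_log_div_le hm hK (hlog.trans ?_)
  have hW : 2 * K / π * √(1 + K ^ 2) * (π / 2 * I₁ + π / 2 * I₂)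
      = K * √(1 + K ^ 2) * I₁ + K * (√(1 + K ^ 2) * I₂) := by
    field_simp
  rw [hW]
  have := mul_nonneg (mul_nonneg hK.le (sqrt_nonneg (1 + K ^ 2))) hI₁
  linarith

/-- Lemma 3.2, second part: lower bound for profile curves with a Lipschitz bound `K`. -/
theorem willmore_lower_bound (u u' u'' : ℝ → ℝ) (α K : ℝ) (hα : 0 < α) (hK : 0 < K)
    (hu : ∀ x, HasDerivAt u (u' x) x)
    (hu' : ∀ x, HasDerivAt u' (u'' x) x)
    (hu'c : Continuous u')
    (hpos : ∀ x ∈ Set.Icc (-1:ℝ) 1, 0 < u x)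
    (hb1 : u 1 = α) (hb2 : u (-1) = α) (hb3 : u' 1 = 0) (hb4 : u' (-1) = 0)
    (hlip : ∀ x ∈ Set.Icc (-1:ℝ) 1, |u' x| ≤ K)
    (hint1 : IntervalIntegrable (fun x =>
        u x * u'' x ^ 2 * (1 + u' x ^ 2) ^ (-(5/2) : ℝ)) volume (-1) 1)
    (hint2 : IntervalIntegrable (fun x =>
        (u x * Real.sqrt (1 + u' x ^ 2))⁻¹) volume (-1) 1) :
    ∀ x ∈ Set.Icc (-1:ℝ) 1,
      K / (Real.exp ((2 * K / π) * Real.sqrt (1 + K ^ 2) *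
          ((π / 2) * (∫ x in (-1:ℝ)..1, u x * u'' x ^ 2 * (1 + u' x ^ 2) ^ (-(5/2) : ℝ))
            + (π / 2) * ∫ x in (-1:ℝ)..1, (u x * Real.sqrt (1 + u' x ^ 2))⁻¹)) - 1)
        ≤ u x :=
  willmore_lower_bound_general u u' u'' K hK hu hpos hlip hint2
end

section
/- Let u ∈ C³([0,1]) solve weakly the inequality W'(u)(φ) ≥ 0 for all nonnegative φ ∈ H²₀(0,1), where W'(u)(φ) = 2∫₀¹ κ(x)/(1+u'(x)²) φ''(x) dx − 5∫₀¹ κ(x)²u'(x)/√(1+u'(x)²) φ'(x) dx and κ = u''(1+u'²)^(-3/2). Then, with V(x) := u''(x)(1+u'(x)²)^(-5/4), one has 0 ≥ ∫₀¹ φ'(x)·V'(x)(1+u'(x)²)^(-5/4) dx for all nonnegative φ ∈ H²₀(0,1). -/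
open MeasureTheory

/-! Write `Q = 1 + u'²` and `κ = u'' Q^{-3/2}`, so that `κ / Q = u'' Q^{-5/2}`. As `φ'` vanishes
at both endpoints, integrating by parts turns `∫ κ/Q · φ''` into `-∫ (κ/Q)' φ'`, and the pointwise
identity `2 (κ/Q)' + 5 κ² u' / √Q = 2 V' Q^{-5/4}` then turns `W'(u)(φ)` into
`-2 ∫ φ' V' Q^{-5/4}`. -/

theorem HasDerivAt.mul_one_add_sq_rpow {f g : ℝ → ℝ} {a b x : ℝ} (hf : HasDerivAt f a x)
    (hg : HasDerivAt g b x) (r : ℝ) :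
    HasDerivAt (fun y => g y * (1 + f y ^ 2) ^ r)
      (b * (1 + f x ^ 2) ^ r + 2 * r * f x * a * g x * (1 + f x ^ 2) ^ (r - 1)) x := by
  have hQ : HasDerivAt (fun y => 1 + f y ^ 2) (2 * f x * a) x := by
    simpa using (hf.pow 2).const_add 1
  exact (hg.mul (hQ.rpow_const (p := r) (Or.inl (by positivity)))).congr_deriv (by ring)

@[fun_prop]
theorem Continuous.one_add_sq_rpow {f : ℝ → ℝ} (hf : Continuous f) (r : ℝ) :
    Continuous fun x => (1 + f x ^ 2) ^ r :=
  (by fun_prop : Continuous fun x => 1 + f x ^ 2).rpow_const fun _ => Or.inl (by positivity)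

theorem intervalIntegral.integral_mul_deriv_eq_neg_of_eq_zero {a b : ℝ} {u u' v v' : ℝ → ℝ}
    (hu : ∀ x ∈ Set.uIcc a b, HasDerivAt u (u' x) x)
    (hv : ∀ x ∈ Set.uIcc a b, HasDerivAt v (v' x) x)
    (hu' : IntervalIntegrable u' volume a b) (hv' : IntervalIntegrable v' volume a b)
    (ha : v a = 0) (hb : v b = 0) :
    ∫ x in a..b, u x * v' x = -∫ x in a..b, u' x * v x := by
  simp [integral_mul_deriv_eq_deriv_mul hu hv hu' hv', ha, hb]

/-- With `q = 1 + u'²`, `p = u'`, `c = u''`, `d = u'''`, this reads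
`2 (κ/q)' + 5 κ² u' / √q = 2 V' q^{-5/4}`. -/
theorem two_mul_deriv_curvature_div_add_eq {q : ℝ} (hq : 0 < q) (p c d : ℝ) :
    2 * (d * q ^ (-(5/2) : ℝ) - 5 * p * c * c * q ^ (-(7/2) : ℝ))
        + 5 * ((c * q ^ (-(3/2) : ℝ)) ^ 2 * p / √q)
      = 2 * ((d * q ^ (-(5/4) : ℝ) - 5/2 * p * c * c * q ^ (-(9/4) : ℝ))
        * q ^ (-(5/4) : ℝ)) := by
  have hsq : (q ^ (-(3/2) : ℝ)) ^ 2 / √q = q ^ (-(7/2) : ℝ) := by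
    rw [Real.sqrt_eq_rpow, ← Real.rpow_natCast, ← Real.rpow_mul hq.le, ← Real.rpow_sub hq]
    norm_num
  have h52 : q ^ (-(5/4) : ℝ) * q ^ (-(5/4) : ℝ) = q ^ (-(5/2) : ℝ) := by
    rw [← Real.rpow_add hq]; norm_num
  have h72 : q ^ (-(9/4) : ℝ) * q ^ (-(5/4) : ℝ) = q ^ (-(7/2) : ℝ) := by
    rw [← Real.rpow_add hq]; norm_num
  have hκ : (c * q ^ (-(3/2) : ℝ)) ^ 2 * p / √q = c ^ 2 * p * q ^ (-(7/2) : ℝ) := by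
    rw [← hsq]; ring
  rw [hκ]
  linear_combination (-2 * d) * h52 + (5 * p * c * c) * h72

theorem HasDerivAt.mul_one_add_sq_rpow_neg_five_halves {f g : ℝ → ℝ} {a b x : ℝ}
    (hf : HasDerivAt f a x) (hg : HasDerivAt g b x) :
    HasDerivAt (fun y => g y * (1 + f y ^ 2) ^ (-(5/2) : ℝ))
      (b * (1 + f x ^ 2) ^ (-(5/2) : ℝ)
        - 5 * f x * a * g x * (1 + f x ^ 2) ^ (-(7/2) : ℝ)) x := by
  convert hf.mul_one_add_sq_rpow hg (-(5/2)) using 1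
  norm_num
  ring

theorem HasDerivAt.mul_one_add_sq_rpow_neg_five_quarters {f g : ℝ → ℝ} {a b x : ℝ}
    (hf : HasDerivAt f a x) (hg : HasDerivAt g b x) :
    HasDerivAt (fun y => g y * (1 + f y ^ 2) ^ (-(5/4) : ℝ))
      (b * (1 + f x ^ 2) ^ (-(5/4) : ℝ)
        - 5/2 * f x * a * g x * (1 + f x ^ 2) ^ (-(9/4) : ℝ)) x := by
  convert hf.mul_one_add_sq_rpow hg (-(5/4)) using 1
  norm_num
  ring

theorem elastica_first_variation_eq {u' u'' u''' φ' φ'' : ℝ → ℝ}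
    (hu' : ∀ x, HasDerivAt u' (u'' x) x) (hu'' : ∀ x, HasDerivAt u'' (u''' x) x)
    (hu'''c : Continuous u''') (hφ' : ∀ x, HasDerivAt φ' (φ'' x) x) (hφ''c : Continuous φ'')
    (hp0 : φ' 0 = 0) (hp1 : φ' 1 = 0) :
    2 * (∫ x in (0:ℝ)..1, (u'' x * (1 + u' x ^ 2) ^ (-(3/2) : ℝ)) / (1 + u' x ^ 2) * φ'' x)
        - 5 * ∫ x in (0:ℝ)..1, (u'' x * (1 + u' x ^ 2) ^ (-(3/2) : ℝ)) ^ 2 * u' x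
            / Real.sqrt (1 + u' x ^ 2) * φ' x
      = -2 * ∫ x in (0:ℝ)..1, φ' x
          * (deriv (fun y => u'' y * (1 + u' y ^ 2) ^ (-(5/4) : ℝ)) x
            * (1 + u' x ^ 2) ^ (-(5/4) : ℝ)) := by
  have hu'c : Continuous u' := Differentiable.continuous fun x => (hu' x).differentiableAt
  have hu''c : Continuous u'' := Differentiable.continuous fun x => (hu'' x).differentiableAt
  have hφ'c : Continuous φ' := Differentiable.continuous fun x => (hφ' x).differentiableAt
  have hκQ : ∀ x, u'' x * (1 + u' x ^ 2) ^ (-(3/2) : ℝ) / (1 + u' x ^ 2)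
      = u'' x * (1 + u' x ^ 2) ^ (-(5/2) : ℝ) := fun x => by
    rw [mul_div_assoc, ← Real.rpow_sub_one (by positivity)]; norm_num
  have hparts := intervalIntegral.integral_mul_deriv_eq_neg_of_eq_zero
    (fun x _ => (hu' x).mul_one_add_sq_rpow_neg_five_halves (hu'' x)) (fun x _ => hφ' x)
    (by apply Continuous.intervalIntegrable; fun_prop) (hφ''c.intervalIntegrable 0 1) hp0 hp1
  simp_rw [hκQ, hparts]
  simp only [mul_neg, ← intervalIntegral.integral_const_mul, ← intervalIntegral.integral_neg]
  rw [← intervalIntegral.integral_sub (by apply Continuous.intervalIntegrable; fun_prop)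
    (by apply Continuous.intervalIntegrable; fun_prop (disch := intros; positivity))]
  refine intervalIntegral.integral_congr fun x _ => ?_
  rw [((hu' x).mul_one_add_sq_rpow_neg_five_quarters (hu'' x)).deriv]
  linear_combination (-φ' x) *
    two_mul_deriv_curvature_div_add_eq (by positivity : 0 < 1 + u' x ^ 2) (u' x) (u'' x) (u''' x)

theorem auxiliary_function_subsolution_general (u' u'' u''' : ℝ → ℝ)
    (hu' : ∀ x, HasDerivAt u' (u'' x) x)
    (hu'' : ∀ x, HasDerivAt u'' (u''' x) x)
    (hu'''c : Continuous u''')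
    (hsuper : ∀ φ φ' φ'' : ℝ → ℝ,
      (∀ x, HasDerivAt φ (φ' x) x) → (∀ x, HasDerivAt φ' (φ'' x) x) → Continuous φ'' →
      φ 0 = 0 → φ 1 = 0 → φ' 0 = 0 → φ' 1 = 0 → (∀ x ∈ Set.Icc (0:ℝ) 1, 0 ≤ φ x) →
      0 ≤ 2 * (∫ x in (0:ℝ)..1,
            (u'' x * (1 + u' x ^ 2) ^ (-(3/2) : ℝ)) / (1 + u' x ^ 2) * φ'' x)
          - 5 * ∫ x in (0:ℝ)..1,
            (u'' x * (1 + u' x ^ 2) ^ (-(3/2) : ℝ)) ^ 2 * u' x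
              / Real.sqrt (1 + u' x ^ 2) * φ' x) :
    ∀ φ φ' φ'' : ℝ → ℝ,
      (∀ x, HasDerivAt φ (φ' x) x) → (∀ x, HasDerivAt φ' (φ'' x) x) → Continuous φ'' →
      φ 0 = 0 → φ 1 = 0 → φ' 0 = 0 → φ' 1 = 0 → (∀ x ∈ Set.Icc (0:ℝ) 1, 0 ≤ φ x) →
      (∫ x in (0:ℝ)..1,
          φ' x * (deriv (fun y => u'' y * (1 + u' y ^ 2) ^ (-(5/4) : ℝ)) x
            * (1 + u' x ^ 2) ^ (-(5/4) : ℝ))) ≤ 0 := by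
  intro φ φ' φ'' hφ hφ' hφ''c h0 h1 hp0 hp1 hpos
  have H := hsuper φ φ' φ'' hφ hφ' hφ''c h0 h1 hp0 hp1 hpos
  rw [elastica_first_variation_eq hu' hu'' hu'''c hφ' hφ''c hp0 hp1] at H
  linarith

/-- Proposition 2.10, first part: if `u` is a weak supersolution of the elastica equation,
then the auxiliary function `V = u''(1+u'²)^{-5/4}` is a weak subsolution of a second order
equation in divergence form. -/
theorem auxiliary_function_subsolution (u u' u'' u''' : ℝ → ℝ)
    (hu : ∀ x, HasDerivAt u (u' x) x)
    (hu' : ∀ x, HasDerivAt u' (u'' x) x)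
    (hu'' : ∀ x, HasDerivAt u'' (u''' x) x)
    (hu'''c : Continuous u''')
    (hsuper : ∀ φ φ' φ'' : ℝ → ℝ,
      (∀ x, HasDerivAt φ (φ' x) x) → (∀ x, HasDerivAt φ' (φ'' x) x) → Continuous φ'' →
      φ 0 = 0 → φ 1 = 0 → φ' 0 = 0 → φ' 1 = 0 → (∀ x ∈ Set.Icc (0:ℝ) 1, 0 ≤ φ x) →
      0 ≤ 2 * (∫ x in (0:ℝ)..1,
            (u'' x * (1 + u' x ^ 2) ^ (-(3/2) : ℝ)) / (1 + u' x ^ 2) * φ'' x)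
          - 5 * ∫ x in (0:ℝ)..1,
            (u'' x * (1 + u' x ^ 2) ^ (-(3/2) : ℝ)) ^ 2 * u' x
              / Real.sqrt (1 + u' x ^ 2) * φ' x) :
    ∀ φ φ' φ'' : ℝ → ℝ,
      (∀ x, HasDerivAt φ (φ' x) x) → (∀ x, HasDerivAt φ' (φ'' x) x) → Continuous φ'' →
      φ 0 = 0 → φ 1 = 0 → φ' 0 = 0 → φ' 1 = 0 → (∀ x ∈ Set.Icc (0:ℝ) 1, 0 ≤ φ x) →
      (∫ x in (0:ℝ)..1,
          φ' x * (deriv (fun y => u'' y * (1 + u' y ^ 2) ^ (-(5/4) : ℝ)) x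
            * (1 + u' x ^ 2) ^ (-(5/4) : ℝ))) ≤ 0 :=
  auxiliary_function_subsolution_general u' u'' u''' hu' hu'' hu'''c hsuper
end
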